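/- Let d ≥ 1 and let σ, γ ∈ S_d satisfy γ² = id and γ∘σ∘γ = σ⁻¹. Let c₁ and c₂ be two distinct cycle factors of σ, each satisfying γ∘cᵢ∘γ = cᵢ⁻¹ and with no fixed point of γ in its support, with supports of even cardinalities e′ and e respectively. Fix positive even integers e₁′, e₂′ with e₁′ + e₂′ = e′. Then the number of 3-cycles τ ∈ S_d whose support meets the support of c₁ in exactly two points and the support of c₂ in exactly one point, satisfying γ∘(τ∘σ)∘γ = (τ∘σ)⁻¹, and such that τ∘σ has exactly two cycle factors supported inside the union of the supports of c₁ and c₂ — one with support of cardinality e₁′ disjoint from the support of c₂, and one with support of cardinality e₂′ + e containing the support of c₂ — equals 4. -/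

import Mathlib

open Equiv Equiv.Perm

/-!
Write `S`, `T` for the supports of `c₁`, `c₂`. A 3-cycle `τ` meeting `S` in two points and `T`
in one is `y ↦ a ↦ b ↦ y` with `y ∈ T` and `b = σ ^ s a`, `0 < s < #S`. Then `τ * σ` runs
through `a, σ a, …, σ ^ (s - 1) a`, jumps to `y`, runs around `c₂` and returns to `a`: a cycle
of length `s + #T`, while the rest of `c₁` closes up into a cycle of length `#S - s`. So the
size condition forces `s = e₂'`.

The permutation `δ = σ * γ` is an involution, and `τ * σ` is real for `γ` iff `δ` conjugates
`τ` to `τ⁻¹`, i.e. iff `δ y = y` and `δ a = b = σ ^ e₂' a`. On each of the two even cycles, `δ`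
agrees with a given even power of `σ` at exactly two points, because `γ` has no fixed point
there. Hence there are two choices of `a` and two of `y`, and `(a, y)` determines `τ`.
-/

open Finset

theorem Int.two_mul_dvd_two_mul_iff {h t : ℤ} :
    2 * h ∣ 2 * t ↔ 2 * h ∣ t ∨ 2 * h ∣ t + h := by
  constructor
  · rintro ⟨q, hq⟩
    obtain ⟨r, rfl | rfl⟩ := Int.even_or_odd' q
    · exact .inl ⟨r, by linarith⟩
    · exact .inr ⟨r + 1, by linarith⟩
  · rintro (⟨q, hq⟩ | ⟨q, hq⟩)
    · exact ⟨2 * q, by rw [hq]; ring⟩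
    · exact ⟨2 * q - 1, by linarith⟩

theorem conj_mul_eq_inv_iff {G : Type*} [Group G] {γ σ τ : G} :
    γ * (τ * σ) * γ = (τ * σ)⁻¹ ↔ σ * γ * τ * (σ * γ) = τ⁻¹ := by
  rw [← mul_right_inj σ]
  simp only [mul_inv_rev, mul_assoc, mul_inv_cancel_left]

namespace Equiv.Perm

variable {α : Type*}

theorem apply_zpow_apply_of_conj_eq_inv {f γ : Perm α} (hγ : γ * γ = 1)
    (hγf : γ * f * γ = f⁻¹) (i : ℤ) (x : α) : γ ((f ^ i) x) = (f ^ (-i)) (γ x) := by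
  have hinv : γ⁻¹ = γ := inv_eq_of_mul_eq_one_right hγ
  have hconj : γ * f ^ i * γ = f ^ (-i) := by
    have := conj_zpow (a := γ) (b := f) (i := i)
    rwa [hinv, hγf, inv_zpow', eq_comm] at this
  rw [← hconj, mul_apply, mul_apply, ← mul_apply γ γ, hγ, one_apply]

section IsCycleOn

variable {f : Perm α} {S : Finset α} {a : α}

theorem IsCycleOn.pow_apply_eq_pow_apply_iff_of_lt (hf : f.IsCycleOn S) (ha : a ∈ S)
    {i j : ℕ} (hi : i < #S) (hj : j < #S) : (f ^ i) a = (f ^ j) a ↔ i = j := by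
  rw [hf.pow_apply_eq_pow_apply ha, Nat.ModEq, Nat.mod_eq_of_lt hi, Nat.mod_eq_of_lt hj]

theorem IsCycleOn.pow_apply_ne_self (hf : f.IsCycleOn S) (ha : a ∈ S) {i : ℕ} (h0 : 0 < i)
    (hi : i < #S) : (f ^ i) a ≠ a := by
  rw [Ne, hf.pow_apply_eq ha]
  exact Nat.not_dvd_of_pos_of_lt h0 hi

theorem IsCycleOn.pow_apply_mem (hf : f.IsCycleOn S) (ha : a ∈ S) (i : ℕ) : (f ^ i) a ∈ S :=
  (hf.1.perm_pow i).mapsTo ha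

theorem IsCycleOn.ne_pow_apply_of_disjoint {T : Finset α} (hf : f.IsCycleOn S)
    (hST : _root_.Disjoint S T) {y : α} (ha : a ∈ S) (hy : y ∈ T) {s : ℕ} (hs : 0 < s)
    (hsS : s < #S) : y ≠ a ∧ y ≠ (f ^ s) a ∧ a ≠ (f ^ s) a :=
  ⟨fun h => disjoint_left.mp hST ha (h ▸ hy),
    fun h => disjoint_left.mp hST (hf.pow_apply_mem ha s) (h ▸ hy),
    (hf.pow_apply_ne_self ha hs hsS).symm⟩

theorem IsCycleOn.nodup_iterate (hf : f.IsCycleOn S) (ha : a ∈ S) {n : ℕ} (hn : n ≤ #S) :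
    (List.iterate f a n).Nodup := by
  have hlen : (List.iterate f a n).length ≤ #S := (List.length_iterate ..).trans_le hn
  refine List.nodup_iff_injective_getElem.mpr fun i j hij => Fin.ext ?_
  simp only [List.getElem_iterate, iterate_eq_pow] at hij
  exact (hf.pow_apply_eq_pow_apply_iff_of_lt ha (i.2.trans_le hlen) (j.2.trans_le hlen)).mp hij

theorem IsCycleOn.mem_of_mem_iterate (hf : f.IsCycleOn S) (ha : a ∈ S) {n : ℕ} {x : α}
    (hx : x ∈ List.iterate f a n) : x ∈ S := by
  obtain ⟨i, -, rfl⟩ := List.mem_iterate.mp hx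
  rw [iterate_eq_pow]
  exact hf.pow_apply_mem ha i

theorem IsCycleOn.mem_iterate_card_iff (hf : f.IsCycleOn S) (ha : a ∈ S) {x : α} :
    x ∈ List.iterate f a #S ↔ x ∈ S := by
  refine ⟨hf.mem_of_mem_iterate ha, fun hx => ?_⟩
  obtain ⟨i, hi, rfl⟩ := hf.exists_pow_eq ha hx
  exact List.mem_iterate.mpr ⟨i, hi, by rw [iterate_eq_pow]⟩

/-- Writing the points of `S` as `f ^ i a`, the condition reads `2 * i ≡ c [ZMOD #S]`, where
`c` is even because `γ` has no fixed point in `S`; as `#S` is even, there are two solutions. -/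
theorem IsCycleOn.card_filter_apply_eq_pow_apply [DecidableEq α] {γ : Perm α}
    (hf : f.IsCycleOn S) (hS : S.Nonempty) (hev : Even #S) (hγ : γ * γ = 1)
    (hγf : γ * f * γ = f⁻¹) (hγS : ∀ x ∈ S, γ x ∈ S) (hfix : ∀ x ∈ S, γ x ≠ x)
    {k : ℕ} (hk : Even k) : #{x ∈ S | f (γ x) = (f ^ k) x} = 2 := by
  obtain ⟨a, ha⟩ := hS
  obtain ⟨h, hh⟩ := hev
  obtain ⟨l, hl⟩ := hf.2 ha (hγS a ha)
  have hγpow (i : ℤ) : γ ((f ^ i) a) = (f ^ (l - i)) a := by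
    rw [apply_zpow_apply_of_conj_eq_inv hγ hγf, ← hl, ← mul_apply, ← zpow_add, neg_add_eq_sub]
  have horbit (i j : ℤ) : (f ^ i) a = (f ^ j) a ↔ 2 * (h : ℤ) ∣ j - i := by
    rw [hf.zpow_apply_eq_zpow_apply ha, Int.modEq_iff_dvd, hh]
    push_cast
    ring_nf
  have hmem (i : ℤ) : (f ^ i) a ∈ S := (hf.1.perm_zpow i).mapsTo ha
  obtain ⟨j, rfl⟩ : Odd l := by
    refine Int.not_even_iff_odd.mp fun ⟨j, hj⟩ => hfix _ (hmem j) ?_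
    rw [hγpow, hj, add_sub_cancel_right]
  obtain ⟨k', rfl⟩ := hk
  have hh0 : 0 < h := by
    have := card_pos.mpr ⟨a, ha⟩
    omega
  have hsol (i : ℤ) : f (γ ((f ^ i) a)) = (f ^ (k' + k')) ((f ^ i) a) ↔
      (f ^ i) a = (f ^ (j + 1 - k')) a ∨ (f ^ i) a = (f ^ (j + 1 - k' + h)) a := by
    rw [hγpow, ← mul_apply, ← zpow_one_add, ← zpow_natCast, ← mul_apply, ← zpow_add, horbit,
      horbit, horbit, show j + 1 - k' + h - i = j + 1 - k' - i + h by ring,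
      ← Int.two_mul_dvd_two_mul_iff, ← dvd_neg]
    push_cast
    ring_nf
  have hfilter : {x ∈ S | f (γ x) = (f ^ (k' + k')) x} =
      {(f ^ (j + 1 - k')) a, (f ^ (j + 1 - k' + h)) a} := by
    ext x
    simp only [mem_filter, mem_insert, mem_singleton]
    constructor
    · rintro ⟨hx, hfx⟩
      obtain ⟨i, rfl⟩ := hf.2 ha hx
      exact (hsol i).mp hfx
    · rintro (rfl | rfl)
      · exact ⟨hmem _, (hsol _).mpr (.inl rfl)⟩
      · exact ⟨hmem _, (hsol _).mpr (.inr rfl)⟩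
  rw [hfilter, card_pair]
  rw [Ne, horbit, add_sub_cancel_left]
  exact fun hd => by have := Int.le_of_dvd (by omega) hd; omega

end IsCycleOn

section IterateMul

variable {τ σ : Perm α} {x : α} {n : ℕ}

theorem mul_pow_apply_eq_pow_apply (h : ∀ j, 0 < j → j < n → τ ((σ ^ j) x) = (σ ^ j) x)
    {i : ℕ} (hi : i < n) : ((τ * σ) ^ i) x = (σ ^ i) x := by
  induction i with
  | zero => simp
  | succ i ih =>
    rw [pow_succ', mul_apply, ih (by omega), mul_apply, ← mul_apply σ, ← pow_succ',
      h _ (by omega) hi]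

theorem mul_pow_apply_eq_apply_pow_apply
    (h : ∀ j, 0 < j → j < n → τ ((σ ^ j) x) = (σ ^ j) x) (hn : 0 < n) :
    ((τ * σ) ^ n) x = τ ((σ ^ n) x) := by
  obtain ⟨m, rfl⟩ : ∃ m, n = m + 1 := ⟨n - 1, by omega⟩
  rw [pow_succ', mul_apply, mul_pow_apply_eq_pow_apply h (by omega), mul_apply, ← mul_apply σ,
    ← pow_succ']

theorem iterate_mul_eq_iterate (h : ∀ j, 0 < j → j < n → τ ((σ ^ j) x) = (σ ^ j) x) :
    List.iterate (τ * σ) x n = List.iterate σ x n :=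
  List.ext_getElem (by simp) fun i hi _ => by
    simp only [List.getElem_iterate, iterate_eq_pow]
    exact mul_pow_apply_eq_pow_apply h (by simpa using hi)

end IterateMul

variable [DecidableEq α]

theorem swap_mul_swap_apply_of_ne {y a b z : α} (hy : z ≠ y) (ha : z ≠ a) (hb : z ≠ b) :
    (swap y a * swap a b) z = z := by
  rw [mul_apply, swap_apply_of_ne_of_ne ha hb, swap_apply_of_ne_of_ne hy ha]

theorem swap_mul_swap_conj_eq_inv_iff {δ : Perm α} (hδ : δ * δ = 1) {y a b : α}
    (hya : y ≠ a) (hyb : y ≠ b) (hδa : δ y ≠ a) (hδb : δ y ≠ b) :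
    δ * (swap y a * swap a b) * δ = (swap y a * swap a b)⁻¹ ↔ δ y = y ∧ δ a = b := by
  have hδδ (x : α) : δ (δ x) = x := by rw [← mul_apply, hδ, one_apply]
  have hτy : (swap y a * swap a b) y = a := by simp [swap_apply_of_ne_of_ne hya hyb]
  have hτb : (swap y a * swap a b) b = y := by simp
  constructor
  · intro E
    have hE : δ a = (swap y a * swap a b)⁻¹ (δ y) := by
      rw [← E, mul_apply, mul_apply, hδδ, hτy]
    have hy : δ y = y := by
      by_contra hne
      rw [Perm.inv_eq_iff_eq.mpr (swap_mul_swap_apply_of_ne hne hδa hδb).symm] at hE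
      exact hya (δ.injective hE).symm
    exact ⟨hy, by rw [hE, hy, Perm.inv_eq_iff_eq, hτb]⟩
  · rintro ⟨hy, ha⟩
    have hb : δ b = a := by rw [← ha, hδδ]
    have hinv : δ⁻¹ = δ := inv_eq_of_mul_eq_one_right hδ
    calc δ * (swap y a * swap a b) * δ
        _ = (δ * swap y a * δ⁻¹) * (δ * swap a b * δ⁻¹) := by
          simp only [hinv, mul_assoc]
          rw [← mul_assoc δ δ, hδ, one_mul]
        _ = swap y b * swap b a := by rw [← swap_apply_apply, ← swap_apply_apply, hy, ha, hb]
        _ = (swap y a * swap a b)⁻¹ := by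
          rw [mul_inv_rev, swap_inv, swap_inv]
          ext x
          simp only [mul_apply, swap_apply_def]
          split_ifs <;> simp_all

theorem conj_swap_mul_swap_mul_eq_inv_iff {σ γ : Perm α} (hσ : γ * σ * γ = σ⁻¹) {y a b : α}
    (hya : y ≠ a) (hyb : y ≠ b) (hδa : σ (γ y) ≠ a) (hδb : σ (γ y) ≠ b) :
    γ * (swap y a * swap a b * σ) * γ = (swap y a * swap a b * σ)⁻¹ ↔
      σ (γ y) = y ∧ σ (γ a) = b := by
  have hδ : σ * γ * (σ * γ) = 1 := by
    rw [mul_assoc, ← mul_assoc γ, hσ, mul_inv_cancel]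
  rw [conj_mul_eq_inv_iff]
  exact swap_mul_swap_conj_eq_inv_iff hδ hya hyb hδa hδb

variable [Fintype α]

theorem exists_mem_cycleFactorsFinset_support_eq_iterate {f : Perm α} {x : α} {n : ℕ}
    (hn : 2 ≤ n) (hnd : (List.iterate f x n).Nodup) (hx : (f ^ n) x = x) :
    ∃ c ∈ f.cycleFactorsFinset,
      c.support = (List.iterate f x n).toFinset ∧ #c.support = n := by
  have hlen : (List.iterate f x n).length = n := List.length_iterate ..
  have hsupp := List.support_formPerm_of_nodup _ hnd fun y h => by
    have := congrArg List.length h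
    simp only [hlen, List.length_singleton] at this
    omega
  refine ⟨_, mem_cycleFactorsFinset_iff.mpr ⟨List.isCycle_formPerm hnd (by omega), ?_⟩, hsupp,
    by rw [hsupp, List.toFinset_card_of_nodup hnd, hlen]⟩
  intro z hz
  rw [hsupp, List.mem_toFinset] at hz
  obtain ⟨i, hi, rfl⟩ := List.getElem_of_mem hz
  have hper : Function.IsPeriodicPt f n x := by
    rwa [Function.IsPeriodicPt, Function.IsFixedPt, iterate_eq_pow]
  rw [List.formPerm_apply_getElem _ hnd, List.getElem_iterate, List.getElem_iterate, hlen,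
    hper.iterate_mod_apply, Function.iterate_succ_apply']

theorem filter_cycleFactorsFinset_support_subset_eq_pair {f A B : Perm α} {U : Finset α}
    (hA : A ∈ f.cycleFactorsFinset) (hB : B ∈ f.cycleFactorsFinset)
    (hU : A.support ∪ B.support = U) :
    {g ∈ f.cycleFactorsFinset | g.support ⊆ U} = {A, B} := by
  ext g
  simp only [mem_filter, mem_insert, mem_singleton]
  constructor
  · rintro ⟨hg, hgU⟩
    obtain ⟨z, hz⟩ := (mem_cycleFactorsFinset_iff.mp hg).1.nonempty_support
    rw [cycle_is_cycleOf hz hg]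
    rcases mem_union.mp (hU ▸ hgU hz) with hzA | hzB
    · exact .inl (cycle_is_cycleOf hzA hA).symm
    · exact .inr (cycle_is_cycleOf hzB hB).symm
  · rintro (rfl | rfl)
    · exact ⟨hA, hU ▸ subset_union_left⟩
    · exact ⟨hB, hU ▸ subset_union_right⟩

theorem apply_mem_support_of_conj_eq_inv {c γ : Perm α} (hγ : γ * γ = 1)
    (hγc : γ * c * γ = c⁻¹) {x : α} (hx : x ∈ c.support) : γ x ∈ c.support := by
  have hinv : γ⁻¹ = γ := inv_eq_of_mul_eq_one_right hγ
  have h := support_conj (σ := γ) (τ := c)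
  rw [hinv, hγc, support_inv] at h
  rw [h]
  exact mem_map_of_mem _ hx

theorem isThreeCycle_swap_mul_swap {y a b : α} (hya : y ≠ a) (hyb : y ≠ b) (hab : a ≠ b) :
    (swap y a * swap a b).IsThreeCycle := by
  rw [swap_comm]
  exact isThreeCycle_swap_mul_swap_same hya.symm hab hyb

theorem IsThreeCycle.exists_eq_swap_mul_swap {τ : Perm α} {S T : Finset α}
    (h3 : τ.IsThreeCycle) (hST : _root_.Disjoint S T) (hS : #(τ.support ∩ S) = 2)
    (hT : #(τ.support ∩ T) = 1) :
    ∃ y ∈ T, ∃ a ∈ S, ∃ b ∈ S, a ≠ b ∧ τ = swap y a * swap a b := by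
  obtain ⟨y, hy⟩ := card_eq_one.mp hT
  have hyτ : y ∈ τ.support ∧ y ∈ T := mem_inter.mp (hy ▸ mem_singleton_self y)
  have hsub : τ.support ⊆ S ∪ T := by
    have hcard : #(τ.support ∩ (S ∪ T)) = #τ.support := by
      rw [inter_union_distrib_left,
        card_union_of_disjoint (hST.mono inter_subset_right inter_subset_right), hS, hT,
        h3.card_support]
    exact inter_eq_left.mp (eq_of_subset_of_card_le inter_subset_left hcard.ge)
  have hmemS : ∀ z ∈ τ.support, z ≠ y → z ∈ S := fun z hz hzy =>
    (mem_union.mp (hsub hz)).resolve_right fun hzT =>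
      hzy (mem_singleton.mp (hy ▸ mem_inter.mpr ⟨hz, hzT⟩))
  have hnd := h3.nodup_iff_mem_support.mpr hyτ.1
  simp only [List.nodup_cons, List.mem_cons, List.not_mem_nil, or_false, not_or] at hnd
  have hτy := apply_mem_support.mpr hyτ.1
  exact ⟨y, hyτ.2, τ y, hmemS _ hτy (Ne.symm hnd.1.1), τ (τ y),
    hmemS _ (apply_mem_support.mpr hτy) (Ne.symm hnd.1.2), hnd.2.1,
    h3.eq_swap_mul_swap_iff_mem_support.mpr hyτ.1⟩

end Equiv.Perm

section CutAndJoin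

variable {α : Type*} [DecidableEq α] [Fintype α] {σ γ : Perm α} {S T : Finset α}

theorem exists_cycleFactor_join (hS : σ.IsCycleOn S) (hT : σ.IsCycleOn T) (hST : Disjoint S T)
    {a y : α} (ha : a ∈ S) (hy : y ∈ T) {s : ℕ} (hs : 0 < s) (hsS : s < #S) :
    ∃ B ∈ (swap y a * swap a ((σ ^ s) a) * σ).cycleFactorsFinset,
      B.support = (List.iterate σ a s ++ List.iterate σ y #T).toFinset ∧
        #B.support = s + #T := by
  obtain ⟨hya, hyb, hab⟩ := hS.ne_pow_apply_of_disjoint hST ha hy hs hsS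
  have hT0 : 0 < #T := card_pos.mpr ⟨y, hy⟩
  have hnS {z} (hz : z ∈ T) : z ∉ S := fun h => disjoint_left.mp hST h hz
  generalize hbdef : (σ ^ s) a = b at *
  have hb : b ∈ S := hbdef ▸ hS.pow_apply_mem ha s
  have fixS : ∀ j, 0 < j → j < s → (swap y a * swap a b) ((σ ^ j) a) = (σ ^ j) a :=
    fun j hj0 hjs => swap_mul_swap_apply_of_ne (fun h => hnS hy (h ▸ hS.pow_apply_mem ha j))
      (hS.pow_apply_ne_self ha hj0 (by omega))
      (hbdef ▸ (hS.pow_apply_eq_pow_apply_iff_of_lt ha (by omega) hsS).not.mpr hjs.ne)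
  have fixT : ∀ j, 0 < j → j < #T → (swap y a * swap a b) ((σ ^ j) y) = (σ ^ j) y :=
    fun j hj0 hjT => swap_mul_swap_apply_of_ne (hT.pow_apply_ne_self hy hj0 hjT)
      (fun h => hnS (hT.pow_apply_mem hy j) (h ▸ ha))
      (fun h => hnS (hT.pow_apply_mem hy j) (h ▸ hb))
  have hjoin : ((swap y a * swap a b * σ) ^ s) a = y := by
    rw [mul_pow_apply_eq_apply_pow_apply fixS hs, hbdef]
    simp
  have hiter : List.iterate (swap y a * swap a b * σ) a (s + #T) =
      List.iterate σ a s ++ List.iterate σ y #T := by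
    rw [List.iterate_add, iterate_eq_pow, hjoin, iterate_mul_eq_iterate fixS,
      iterate_mul_eq_iterate fixT]
  have hclose : ((swap y a * swap a b * σ) ^ (s + #T)) a = a := by
    rw [add_comm, pow_add, mul_apply, hjoin, mul_pow_apply_eq_apply_pow_apply fixT hT0,
      hT.pow_card_apply hy]
    simp [swap_apply_of_ne_of_ne hya hyb]
  have hnd : (List.iterate σ a s ++ List.iterate σ y #T).Nodup :=
    List.nodup_append.mpr ⟨hS.nodup_iterate ha hsS.le, hT.nodup_iterate hy le_rfl,
      fun u hu v hv huv =>
        hnS (hT.mem_of_mem_iterate hy hv) (huv ▸ hS.mem_of_mem_iterate ha hu)⟩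
  rw [← hiter] at hnd ⊢
  exact exists_mem_cycleFactorsFinset_support_eq_iterate (by omega) hnd hclose

theorem exists_cycleFactor_cut (hS : σ.IsCycleOn S) {a y : α} (ha : a ∈ S) (hy : y ∉ S) {s : ℕ}
    (hs : 0 < s) (hsS : s + 2 ≤ #S) :
    ∃ A ∈ (swap y a * swap a ((σ ^ s) a) * σ).cycleFactorsFinset,
      A.support = (List.iterate σ ((σ ^ s) a) (#S - s)).toFinset ∧ #A.support = #S - s := by
  have hab := (hS.pow_apply_ne_self ha hs (by omega)).symm
  have hb := hS.pow_apply_mem ha s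
  have fix : ∀ j, 0 < j → j < #S - s →
      (swap y a * swap a ((σ ^ s) a)) ((σ ^ j) ((σ ^ s) a)) = (σ ^ j) ((σ ^ s) a) := by
    intro j hj0 hjs
    rw [← mul_apply (σ ^ j), ← pow_add]
    exact swap_mul_swap_apply_of_ne (fun h => hy (h ▸ hS.pow_apply_mem ha _))
      (hS.pow_apply_ne_self ha (by omega) (by omega))
      ((hS.pow_apply_eq_pow_apply_iff_of_lt ha (by omega) (by omega)).not.mpr (by omega))
  have hclose : ((swap y a * swap a ((σ ^ s) a) * σ) ^ (#S - s)) ((σ ^ s) a) = (σ ^ s) a := by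
    rw [mul_pow_apply_eq_apply_pow_apply fix (by omega), ← mul_apply (σ ^ _), ← pow_add,
      Nat.sub_add_cancel (by omega), hS.pow_card_apply ha]
    simp [swap_apply_of_ne_of_ne (fun h : (σ ^ s) a = y => hy (h ▸ hb)) hab.symm]
  rw [← iterate_mul_eq_iterate fix]
  exact exists_mem_cycleFactorsFinset_support_eq_iterate (by omega)
    (iterate_mul_eq_iterate fix ▸ hS.nodup_iterate hb (by omega)) hclose

def IsCutAndJoin (σ γ : Perm α) (S T : Finset α) (k₁ k₂ : ℕ) (τ : Perm α) : Prop :=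
  τ.IsThreeCycle ∧ #(τ.support ∩ S) = 2 ∧ #(τ.support ∩ T) = 1 ∧
    γ * (τ * σ) * γ = (τ * σ)⁻¹ ∧
    ∃ f₁ f₂ : Perm α, f₁ ≠ f₂ ∧
      ((τ * σ).cycleFactorsFinset.filter fun f => f.support ⊆ S ∪ T) = {f₁, f₂} ∧
      #f₁.support = k₁ ∧ Disjoint f₁.support T ∧ #f₂.support = k₂ + #T ∧ T ⊆ f₂.support

variable {k₁ k₂ : ℕ}

theorem IsCutAndJoin.exists_eq_swap_mul_swap {τ : Perm α} (hS : σ.IsCycleOn S)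
    (hT : σ.IsCycleOn T) (hST : Disjoint S T) (hσ : γ * σ * γ = σ⁻¹)
    (hγT : ∀ x ∈ T, γ x ∈ T) (h : IsCutAndJoin σ γ S T k₁ k₂ τ) :
    ∃ a ∈ S, ∃ y ∈ T, σ (γ a) = (σ ^ k₂) a ∧ σ (γ y) = y ∧
      swap y a * swap a ((σ ^ k₂) a) = τ := by
  obtain ⟨h3, hτS, hτT, hreal, f₁, f₂, -, hfilter, -, -, hf₂card, hTf₂⟩ := h
  obtain ⟨y, hy, a, ha, b, hb, hab, rfl⟩ := h3.exists_eq_swap_mul_swap hST hτS hτT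
  obtain ⟨s, hsS, rfl⟩ := hS.exists_pow_eq ha hb
  have hs : 0 < s := Nat.pos_of_ne_zero fun h => hab (by rw [h, pow_zero, one_apply])
  obtain ⟨hya, hyb, -⟩ := hS.ne_pow_apply_of_disjoint hST ha hy hs hsS
  obtain ⟨B, hB, hBsupp, hBcard⟩ := exists_cycleFactor_join hS hT hST ha hy hs hsS
  have hyB : y ∈ B.support := by
    rw [hBsupp, List.mem_toFinset, List.mem_append, hT.mem_iterate_card_iff hy]
    exact .inr hy
  have hf₂ : f₂ ∈ (swap y a * swap a ((σ ^ s) a) * σ).cycleFactorsFinset :=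
    (mem_filter.mp (hfilter ▸ mem_insert_of_mem (mem_singleton_self f₂))).1
  have hf₂B : f₂ = B := (cycle_is_cycleOf (hTf₂ hy) hf₂).trans (cycle_is_cycleOf hyB hB).symm
  obtain rfl : s = k₂ := by rw [hf₂B, hBcard] at hf₂card; omega
  have hδT : σ (γ y) ∈ T := hT.pow_apply_mem (hγT y hy) 1
  obtain ⟨hγy, hγa⟩ := (conj_swap_mul_swap_mul_eq_inv_iff hσ hya hyb
    (fun h => disjoint_left.mp hST ha (h ▸ hδT))
    (fun h => disjoint_left.mp hST (hS.pow_apply_mem ha s) (h ▸ hδT))).mp hreal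
  exact ⟨a, ha, y, hy, hγa, hγy, rfl⟩

theorem isCutAndJoin_swap_mul_swap (hS : σ.IsCycleOn S) (hT : σ.IsCycleOn T)
    (hST : Disjoint S T) (hσ : γ * σ * γ = σ⁻¹) {a y : α} (ha : a ∈ S) (hy : y ∈ T)
    (hk₂ : 0 < k₂) (hk₁ : 2 ≤ k₁) (hk : k₁ + k₂ = #S) (hγa : σ (γ a) = (σ ^ k₂) a)
    (hγy : σ (γ y) = y) : IsCutAndJoin σ γ S T k₁ k₂ (swap y a * swap a ((σ ^ k₂) a)) := by
  obtain ⟨hya, hyb, hab⟩ := hS.ne_pow_apply_of_disjoint hST ha hy hk₂ (by omega)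
  have hb := hS.pow_apply_mem ha k₂
  have hyS : y ∉ S := fun h => disjoint_left.mp hST h hy
  have hsupp := support_swap_mul_swap (x := y) (y := a) (z := (σ ^ k₂) a) (by simp [*])
  obtain ⟨B, hB, hBsupp, hBcard⟩ := exists_cycleFactor_join hS hT hST ha hy hk₂ (by omega)
  obtain ⟨A, hA, hAsupp, hAcard⟩ := exists_cycleFactor_cut hS ha hyS hk₂ (by omega)
  have hAS : A.support ⊆ S := fun x hx =>
    hS.mem_of_mem_iterate hb (List.mem_toFinset.mp (hAsupp ▸ hx))
  have hTB : T ⊆ B.support := fun x hx => by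
    rw [hBsupp, List.mem_toFinset, List.mem_append, hT.mem_iterate_card_iff hy]
    exact .inr hx
  have hunion : A.support ∪ B.support = S ∪ T := by
    have hsplit := List.iterate_add σ a k₂ (#S - k₂)
    rw [Nat.add_sub_cancel' (by omega), iterate_eq_pow] at hsplit
    ext x
    simp only [mem_union, hAsupp, hBsupp, List.mem_toFinset, List.mem_append,
      ← hS.mem_iterate_card_iff ha, ← hT.mem_iterate_card_iff hy, hsplit]
    tauto
  refine ⟨isThreeCycle_swap_mul_swap hya hyb hab, ?_, ?_,
    (conj_swap_mul_swap_mul_eq_inv_iff hσ hya hyb (by rwa [hγy]) (by rwa [hγy])).mpr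
      ⟨hγy, hγa⟩,
    A, B, fun h => hyS (hAS (h ▸ hTB hy)),
    filter_cycleFactorsFinset_support_subset_eq_pair hA hB hunion, by omega, hST.mono_left hAS,
    hBcard, hTB⟩
  · rw [hsupp, insert_inter_of_notMem hyS, insert_inter_of_mem ha, singleton_inter_of_mem hb,
      card_pair hab]
  · rw [hsupp, insert_inter_of_mem hy, insert_inter_of_notMem (disjoint_left.mp hST ha),
      singleton_inter_of_notMem (disjoint_left.mp hST hb), insert_empty, card_singleton]

theorem injOn_swap_mul_swap (hS : σ.IsCycleOn S) (hST : Disjoint S T) (hk₂ : 0 < k₂)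
    (hk₂S : k₂ < #S) :
    Set.InjOn (fun p : α × α => swap p.2 p.1 * swap p.1 ((σ ^ k₂) p.1)) ↑(S ×ˢ T) := by
  rintro ⟨a, y⟩ hp ⟨a', y'⟩ hp' h
  simp only [coe_product, Set.mem_prod, mem_coe] at hp hp' h
  obtain ⟨hya, hyb, hab⟩ := hS.ne_pow_apply_of_disjoint hST hp.1 hp.2 hk₂ hk₂S
  obtain ⟨hya', hyb', hab'⟩ := hS.ne_pow_apply_of_disjoint hST hp'.1 hp'.2 hk₂ hk₂S
  have hy' : y' ∈ (swap y a * swap a ((σ ^ k₂) a)).support := by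
    rw [h, support_swap_mul_swap (by simp [*])]
    exact mem_insert_self _ _
  rw [support_swap_mul_swap (by simp [*]), mem_insert, mem_insert, mem_singleton] at hy'
  obtain rfl : y = y' := (hy'.resolve_right fun h' => h'.elim
    (fun h'' => disjoint_left.mp hST hp.1 (h'' ▸ hp'.2))
    (fun h'' => disjoint_left.mp hST (hS.pow_apply_mem hp.1 k₂) (h'' ▸ hp'.2))).symm
  have := congrArg (· y) h
  simp only [mul_apply, swap_apply_of_ne_of_ne hya hyb, swap_apply_of_ne_of_ne hya' hyb',
    swap_apply_left] at this
  rw [this]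

theorem natCard_isCutAndJoin (hS : σ.IsCycleOn S) (hT : σ.IsCycleOn T) (hST : Disjoint S T)
    (hσ : γ * σ * γ = σ⁻¹) (hγT : ∀ x ∈ T, γ x ∈ T) (hk₂ : 0 < k₂) (hk₁ : 2 ≤ k₁)
    (hk : k₁ + k₂ = #S) :
    Nat.card {τ // IsCutAndJoin σ γ S T k₁ k₂ τ} =
      #{a ∈ S | σ (γ a) = (σ ^ k₂) a} * #{y ∈ T | σ (γ y) = y} := by
  classical
  rw [Nat.card_eq_fintype_card, Fintype.card_subtype, ← card_product,
    ← card_image_of_injOn ((injOn_swap_mul_swap hS hST hk₂ (by omega)).mono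
      (coe_subset.mpr (product_subset_product (filter_subset _ _) (filter_subset _ _))))]
  congr 1
  ext τ
  simp only [mem_filter, mem_univ, true_and, mem_image, mem_product, Prod.exists]
  constructor
  · intro h
    obtain ⟨a, ha, y, hy, hγa, hγy, rfl⟩ := h.exists_eq_swap_mul_swap hS hT hST hσ hγT
    exact ⟨a, y, ⟨⟨ha, hγa⟩, hy, hγy⟩, rfl⟩
  · rintro ⟨a, y, ⟨⟨ha, hγa⟩, hy, hγy⟩, rfl⟩
    exact isCutAndJoin_swap_mul_swap hS hT hST hσ ha hy hk₂ hk₁ hk hγa hγy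

end CutAndJoin

theorem count_real_three_cycles_cut_and_join_even_even_general
    (d : ℕ) (σ γ : Perm (Fin d))
    (hγ : γ * γ = 1) (hσ : γ * σ * γ = σ⁻¹)
    (c₁ c₂ : Perm (Fin d)) (e' e e₁' e₂' : ℕ)
    (h₁ : c₁ ∈ σ.cycleFactorsFinset) (h₂ : c₂ ∈ σ.cycleFactorsFinset) (h12 : c₁ ≠ c₂)
    (hre1 : γ * c₁ * γ = c₁⁻¹) (hre2 : γ * c₂ * γ = c₂⁻¹)
    (hnf1 : ∀ x ∈ c₁.support, γ x ≠ x) (hnf2 : ∀ x ∈ c₂.support, γ x ≠ x)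
    (he' : Even e') (he : Even e)
    (hc1 : c₁.support.card = e') (hc2 : c₂.support.card = e)
    (h1pos : 0 < e₁') (h2pos : 0 < e₂') (h1even : Even e₁') (h2even : Even e₂')
    (hsum : e₁' + e₂' = e') :
    Nat.card {τ : Perm (Fin d) // τ.IsThreeCycle ∧
        (τ.support ∩ c₁.support).card = 2 ∧
        (τ.support ∩ c₂.support).card = 1 ∧
        γ * (τ * σ) * γ = (τ * σ)⁻¹ ∧
        ∃ f₁ f₂ : Perm (Fin d), f₁ ≠ f₂ ∧
          ((τ * σ).cycleFactorsFinset.filter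
              fun f => f.support ⊆ c₁.support ∪ c₂.support) = {f₁, f₂} ∧
          f₁.support.card = e₁' ∧ Disjoint f₁.support c₂.support ∧
          f₂.support.card = e₂' + e ∧ c₂.support ⊆ f₂.support} = 4 := by
  subst hc1 hc2
  have hS := isCycleOn_support_of_mem_cycleFactorsFinset h₁
  have hT := isCycleOn_support_of_mem_cycleFactorsFinset h₂
  have hST := (σ.cycleFactorsFinset_pairwise_disjoint (mem_coe.mpr h₁) (mem_coe.mpr h₂)
    h12).disjoint_support
  have hF₁ : #{a ∈ c₁.support | σ (γ a) = (σ ^ e₂') a} = 2 :=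
    hS.card_filter_apply_eq_pow_apply (mem_cycleFactorsFinset_iff.mp h₁).1.nonempty_support he'
      hγ hσ (fun _ => apply_mem_support_of_conj_eq_inv hγ hre1) hnf1 h2even
  have hF₂ : #{y ∈ c₂.support | σ (γ y) = y} = 2 := by
    simpa using hT.card_filter_apply_eq_pow_apply
      (mem_cycleFactorsFinset_iff.mp h₂).1.nonempty_support he hγ hσ
      (fun _ => apply_mem_support_of_conj_eq_inv hγ hre2) hnf2 ⟨0, rfl⟩
  have hk₁ : 2 ≤ e₁' := by obtain ⟨r, hr⟩ := h1even; omega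
  change Nat.card {τ // IsCutAndJoin σ γ c₁.support c₂.support e₁' e₂' τ} = 4
  rw [natCard_isCutAndJoin hS hT hST hσ (fun _ => apply_mem_support_of_conj_eq_inv hγ hre2)
    h2pos hk₁ hsum, hF₁, hF₂]

/-- Lemma: local multiplicity (v): `c₁, c₂` real cycle factors of `σ` with
no fixed points of `γ` in their supports, of even sizes `e′` and `e`; for fixed positive
even `e₁′, e₂′` with `e₁′ + e₂′ = e′`, the number of 3-cycles `τ` meeting the support of
`c₁` in two points and that of `c₂` in one point, with `γ(τσ)γ = (τσ)⁻¹` and such that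
`τσ` has exactly two cycle factors inside the union of supports — one of size `e₁′`
disjoint from the support of `c₂` and one of size `e₂′ + e` containing it — equals `4`. -/
theorem count_real_three_cycles_cut_and_join_even_even
    (d : ℕ) (hd : 1 ≤ d) (σ γ : Perm (Fin d))
    (hγ : γ * γ = 1) (hσ : γ * σ * γ = σ⁻¹)
    (c₁ c₂ : Perm (Fin d)) (e' e e₁' e₂' : ℕ)
    (h₁ : c₁ ∈ σ.cycleFactorsFinset) (h₂ : c₂ ∈ σ.cycleFactorsFinset) (h12 : c₁ ≠ c₂)
    (hre1 : γ * c₁ * γ = c₁⁻¹) (hre2 : γ * c₂ * γ = c₂⁻¹)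
    (hnf1 : ∀ x ∈ c₁.support, γ x ≠ x) (hnf2 : ∀ x ∈ c₂.support, γ x ≠ x)
    (he' : Even e') (he : Even e)
    (hc1 : c₁.support.card = e') (hc2 : c₂.support.card = e)
    (h1pos : 0 < e₁') (h2pos : 0 < e₂') (h1even : Even e₁') (h2even : Even e₂')
    (hsum : e₁' + e₂' = e') :
    Nat.card {τ : Perm (Fin d) // τ.IsThreeCycle ∧
        (τ.support ∩ c₁.support).card = 2 ∧
        (τ.support ∩ c₂.support).card = 1 ∧
        γ * (τ * σ) * γ = (τ * σ)⁻¹ ∧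
        ∃ f₁ f₂ : Perm (Fin d), f₁ ≠ f₂ ∧
          ((τ * σ).cycleFactorsFinset.filter
              fun f => f.support ⊆ c₁.support ∪ c₂.support) = {f₁, f₂} ∧
          f₁.support.card = e₁' ∧ Disjoint f₁.support c₂.support ∧
          f₂.support.card = e₂' + e ∧ c₂.support ⊆ f₂.support} = 4 :=
  count_real_three_cycles_cut_and_join_even_even_general d σ γ hγ hσ c₁ c₂ e' e e₁' e₂' h₁ h₂ h12
    hre1 hre2 hnf1 hnf2 he' he hc1 hc2 h1pos h2pos h1even h2even hsum
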